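/- Let G = (V, E) be an exactly 3-edge-connected and 2-vertex-connected multigraph, let u be a vertex of G of degree d with neighbors v_1,...,v_d listed with multiplicity, and let 2 ≤ d' ≤ d. Let G' be obtained from G by the cycle expansion of u into a cycle u_1,...,u_{d'}: delete u, add the cycle on the new vertices u_1,...,u_{d'}, join u_i to v_i for 1 ≤ i ≤ d'-1, and join u_{d'} to v_i for d' ≤ i ≤ d. Then G' is exactly 3-edge-connected. -/

import Mathlib

/-! Basic theory of loopless undirected multigraphs. -/

/-- A loopless undirected multigraph on the vertex type `V`: a type of edges
together with a map assigning to each edge its unordered pair of (distinct)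
endpoints.  All multigraphs are assumed to have finitely many edges. -/
structure Multigraph (V : Type) where
  Edge : Type
  ends : Edge → Sym2 V
  loopless : ∀ e, ¬ (ends e).IsDiag
  edge_finite : Finite Edge

namespace Multigraph

open scoped Classical

variable {V : Type}

instance (G : Multigraph V) : Finite G.Edge := G.edge_finite

lemma exists_pair_eq {α : Type} (z : Sym2 α) : ∃ x y, z = s(x, y) := by
  induction z using Sym2.ind with
  | _ x y => exact ⟨x, y, rfl⟩

lemma map_not_isDiag {α β : Type} (f : α → β) (z : Sym2 α)
    (hf : ∀ x ∈ z, ∀ y ∈ z, f x = f y → x = y) (hz : ¬ z.IsDiag) :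
    ¬ (z.map f).IsDiag := by
  obtain ⟨x, y, rfl⟩ := exists_pair_eq z
  rw [Sym2.map_pair_eq, Sym2.mk_isDiag_iff]
  rw [Sym2.mk_isDiag_iff] at hz
  exact fun h => hz (hf x (by simp) y (by simp) h)

/-- Restrict an unordered pair, all of whose members satisfy `P`, to an
unordered pair of elements of the subtype `{x // P x}`. -/
noncomputable def sym2RestrictP {α : Type} (P : α → Prop) (z : Sym2 α) (h : ∀ x ∈ z, P x) :
    Sym2 {x : α // P x} :=
  z.map fun x =>
    if hx : P x then ⟨x, hx⟩
    else Classical.choice (by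
      obtain ⟨a, b, rfl⟩ := exists_pair_eq z
      exact ⟨⟨a, h a (by simp)⟩⟩)

lemma sym2RestrictP_not_isDiag {α : Type} (P : α → Prop) (z : Sym2 α) (h : ∀ x ∈ z, P x)
    (hz : ¬ z.IsDiag) : ¬ (sym2RestrictP P z h).IsDiag := by
  apply map_not_isDiag
  · intro a ha b hb hab
    rw [dif_pos (h a ha), dif_pos (h b hb)] at hab
    exact congrArg Subtype.val hab
  · exact hz

/-- Walks in a multigraph, recorded as alternating sequences of vertices and edges. -/
inductive Walk (G : Multigraph V) : V → V → Type
  | nil (v : V) : Walk G v v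
  | cons {u v w : V} (e : G.Edge) (he : G.ends e = s(u, v)) (p : Walk G v w) : Walk G u w

namespace Walk

variable {G : Multigraph V}

/-- The list of edges used by a walk. -/
def edges : ∀ {u v : V}, G.Walk u v → List G.Edge
  | _, _, nil _ => []
  | _, _, cons e _ p => e :: p.edges

/-- The list of vertices visited by a walk, in order. -/
def support : ∀ {u v : V}, G.Walk u v → List V
  | u, _, nil _ => [u]
  | u, _, cons _ _ p => u :: p.support

end Walk

/-- `G.HasEDP u v k` : there are (at least) `k` pairwise edge-disjoint paths
between `u` and `v` in `G` (formalized as `k` pairwise edge-disjoint trails,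
which is equivalent). -/
def HasEDP (G : Multigraph V) (u v : V) (k : ℕ) : Prop :=
  ∃ P : Fin k → G.Walk u v,
    (∀ i, (P i).edges.Nodup) ∧
    ∀ i j, i ≠ j → ∀ e, e ∈ (P i).edges → e ∉ (P j).edges

/-- `G` is `k`-edge-connected: between any two distinct vertices there are at
least `k` pairwise edge-disjoint paths. -/
def EdgeConnected (G : Multigraph V) (k : ℕ) : Prop :=
  Nontrivial V ∧ ∀ u v : V, u ≠ v → G.HasEDP u v k

/-- `G` is exactly `k`-edge-connected: between any two distinct vertices there
are exactly `k` pairwise edge-disjoint paths (at least `k`, and not `k + 1`). -/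
def ExactlyEdgeConnected (G : Multigraph V) (k : ℕ) : Prop :=
  Nontrivial V ∧ ∀ u v : V, u ≠ v → G.HasEDP u v k ∧ ¬ G.HasEDP u v (k + 1)

/-- The degree of a vertex: the number of edges incident to it. -/
noncomputable def degree (G : Multigraph V) (v : V) : ℕ :=
  {e : G.Edge | v ∈ G.ends e}.ncard

/-- Two vertices are adjacent if some edge joins them. -/
def Adj (G : Multigraph V) (u v : V) : Prop := ∃ e : G.Edge, G.ends e = s(u, v)

/-- `G` restricted to `S` is connected (witnessed by walks staying inside `S`). -/
def ConnectedOn (G : Multigraph V) (S : Set V) : Prop :=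
  ∀ u ∈ S, ∀ v ∈ S, ∃ p : G.Walk u v, ∀ x ∈ p.support, x ∈ S

/-- A multigraph is connected if it is nonempty and any two vertices are
joined by a walk. -/
def Connected (G : Multigraph V) : Prop :=
  Nonempty V ∧ ∀ u v : V, Nonempty (G.Walk u v)

/-- A multigraph is 2-vertex-connected (biconnected) if it is connected and
removing any single vertex leaves it connected. -/
def Biconnected (G : Multigraph V) : Prop :=
  G.Connected ∧ ∀ x : V, G.ConnectedOn {x}ᶜ

/-- A closed walk is a cycle if it repeats no edge, repeats no vertex except
the base point, and has length at least 2 (a double edge is a cycle of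
length 2; loops are excluded since multigraphs are loopless). -/
def IsCycle {G : Multigraph V} {v : V} (p : G.Walk v v) : Prop :=
  p.edges.Nodup ∧ p.support.tail.Nodup ∧ 2 ≤ p.edges.length

/-- A closed walk is chordless if no edge outside of it joins two of its
vertices (a parallel copy of one of its edges counts as a chord). -/
def IsChordless {G : Multigraph V} {v : V} (p : G.Walk v v) : Prop :=
  ∀ e : G.Edge, e ∉ p.edges → ∀ x y : V, G.ends e = s(x, y) →
    x ∈ p.support → y ∈ p.support → False

/-- `G.ReachAvoid S x y`: there is a walk from `x` to `y` avoiding the set `S`. -/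
def ReachAvoid (G : Multigraph V) (S : Set V) (x y : V) : Prop :=
  ∃ p : G.Walk x y, ∀ z ∈ p.support, z ∉ S

/-- The vertex sets of the connected components of `G ∖ S`.  For a cycle (or
any subgraph) `C`, the `C`-partition of the paper consists of `C` together
with these components; its size is the number of components. -/
def componentsAvoiding (G : Multigraph V) (S : Set V) : Set (Set V) :=
  {T | ∃ x, x ∉ S ∧ T = {y | G.ReachAvoid S x y}}

/-- Contract the (nonempty) vertex set `S` of `G` to a single new vertex
(`none`), deleting the edges inside `S`. -/
noncomputable def contractSet (G : Multigraph V) (S : Set V) :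
    Multigraph (Option {x : V // x ∉ S}) where
  Edge := {e : G.Edge // ¬ ∀ x ∈ G.ends e, x ∈ S}
  ends e := (G.ends e.1).map fun x => if h : x ∈ S then none else some ⟨x, h⟩
  loopless := by
    rintro ⟨e, he⟩ hd
    obtain ⟨x, y, hxy⟩ := exists_pair_eq (G.ends e)
    have hxyne : x ≠ y := by
      have h0 := G.loopless e
      rw [hxy, Sym2.mk_isDiag_iff] at h0
      exact h0
    have hor : x ∉ S ∨ y ∉ S := by
      by_contra hcon
      push_neg at hcon
      refine he fun z hz => ?_
      rw [hxy, Sym2.mem_iff] at hz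
      rcases hz with rfl | rfl
      exacts [hcon.1, hcon.2]
    simp only [hxy, Sym2.map_pair_eq, Sym2.mk_isDiag_iff] at hd
    rcases hor with hx | hy
    · rw [dif_neg hx] at hd
      by_cases hy : y ∈ S
      · rw [dif_pos hy] at hd; exact nomatch hd
      · rw [dif_neg hy] at hd
        exact hxyne (congrArg Subtype.val (Option.some_injective _ hd))
    · rw [dif_neg hy] at hd
      by_cases hx : x ∈ S
      · rw [dif_pos hx] at hd; exact nomatch hd
      · rw [dif_neg hx] at hd
        exact hxyne (congrArg Subtype.val (Option.some_injective _ hd))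
  edge_finite := by
    have := G.edge_finite
    exact inferInstance

/-- The subgraph of `G` induced by the vertex set `S`. -/
noncomputable def induce (G : Multigraph V) (S : Set V) : Multigraph ↥S where
  Edge := {e : G.Edge // ∀ x ∈ G.ends e, x ∈ S}
  ends e := sym2RestrictP (· ∈ S) (G.ends e.1) e.2
  loopless := fun e => sym2RestrictP_not_isDiag _ _ _ (G.loopless e.1)
  edge_finite := by
    have := G.edge_finite
    exact inferInstance

/-- Isomorphism of multigraphs. -/
structure Iso {V W : Type} (G : Multigraph V) (H : Multigraph W) where
  vmap : V ≃ W
  emap : G.Edge ≃ H.Edge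
  ends_vmap : ∀ e : G.Edge, H.ends (emap e) = (G.ends e).map vmap

/-- `G` is quasi `k`-regular: at most one vertex has degree different from `k`. -/
def QuasiRegular (G : Multigraph V) (k : ℕ) : Prop :=
  {v : V | G.degree v ≠ k}.Subsingleton

end Multigraph
namespace Multigraph

open scoped Classical

variable {V : Type}

/-- Block gluing: identify the vertex `u₁` of `G₁` with the vertex `u₂` of `G₂`
(the identified vertex is represented by `Sum.inl u₁`), keeping all edges. -/
noncomputable def blockGlue {V₁ V₂ : Type} (G₁ : Multigraph V₁) (G₂ : Multigraph V₂)
    (u₁ : V₁) (u₂ : V₂) : Multigraph (V₁ ⊕ {y : V₂ // y ≠ u₂}) where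
  Edge := G₁.Edge ⊕ G₂.Edge
  ends e :=
    match e with
    | .inl e => (G₁.ends e).map Sum.inl
    | .inr e => (G₂.ends e).map fun y => if h : y = u₂ then Sum.inl u₁ else Sum.inr ⟨y, h⟩
  loopless := by
    rintro (e | e) hd
    · exact map_not_isDiag _ _ (fun x _ y _ h => Sum.inl_injective h) (G₁.loopless e) hd
    · refine map_not_isDiag _ _ (fun x _ y _ h => ?_) (G₂.loopless e) hd
      by_cases hx : x = u₂ <;> by_cases hy : y = u₂
      · rw [hx, hy]
      · simp [hx, hy] at h
      · simp [hx, hy] at h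
      · simp [hx, hy] at h
        exact h
  edge_finite := by
    have := G₁.edge_finite; have := G₂.edge_finite
    exact inferInstance

/-- `k`-bridge addition: add a new vertex (`none`) joined to the existing
vertex `v` by `k` parallel edges. -/
def bridgeAdd (G : Multigraph V) (v : V) (k : ℕ) : Multigraph (Option V) where
  Edge := G.Edge ⊕ Fin k
  ends e :=
    match e with
    | .inl e => (G.ends e).map some
    | .inr _ => s(none, some v)
  loopless := by
    rintro (e | i) hd
    · exact map_not_isDiag _ _ (fun x _ y _ h => Option.some_injective _ h) (G.loopless e) hd
    · rw [Sym2.mk_isDiag_iff] at hd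
      exact nomatch hd
  edge_finite := by
    have := G.edge_finite
    exact inferInstance

end Multigraph
namespace Multigraph

open scoped Classical

variable {V : Type}

lemma other_ne {G : Multigraph V} {u : V} {e : G.Edge} (h : u ∈ G.ends e) :
    Sym2.Mem.other h ≠ u := by
  intro heq
  have hs := Sym2.other_spec h
  rw [heq] at hs
  have hl := G.loopless e
  rw [← hs, Sym2.mk_isDiag_iff] at hl
  exact hl rfl

/-- Vertex gluing: given vertices `u₁` of `G₁` and `u₂` of `G₂`, both of degree
`k` (witnessed by enumerations `ι₁`, `ι₂` of their incident edges), delete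
`u₁` and `u₂` and join, for each `i`, the other endpoint of the `i`-th edge at
`u₁` to the other endpoint of the `i`-th edge at `u₂`. -/
noncomputable def vertexGlue {V₁ V₂ : Type} (G₁ : Multigraph V₁) (G₂ : Multigraph V₂)
    (u₁ : V₁) (u₂ : V₂) {k : ℕ}
    (ι₁ : Fin k ≃ {e : G₁.Edge // u₁ ∈ G₁.ends e})
    (ι₂ : Fin k ≃ {e : G₂.Edge // u₂ ∈ G₂.ends e}) :
    Multigraph ({x : V₁ // x ≠ u₁} ⊕ {y : V₂ // y ≠ u₂}) where
  Edge := {e : G₁.Edge // u₁ ∉ G₁.ends e} ⊕ {e : G₂.Edge // u₂ ∉ G₂.ends e} ⊕ Fin k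
  ends e :=
    match e with
    | .inl e =>
        (sym2RestrictP (· ≠ u₁) (G₁.ends e.1) fun x hx hxe => e.2 (hxe ▸ hx)).map Sum.inl
    | .inr (.inl e) =>
        (sym2RestrictP (· ≠ u₂) (G₂.ends e.1) fun y hy hye => e.2 (hye ▸ hy)).map Sum.inr
    | .inr (.inr i) =>
        s(Sum.inl ⟨Sym2.Mem.other (ι₁ i).2, other_ne (ι₁ i).2⟩,
          Sum.inr ⟨Sym2.Mem.other (ι₂ i).2, other_ne (ι₂ i).2⟩)
  loopless := by
    rintro (e | e | i) hd
    · exact map_not_isDiag _ _ (fun x _ y _ h => Sum.inl_injective h)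
        (sym2RestrictP_not_isDiag _ _ _ (G₁.loopless e.1)) hd
    · exact map_not_isDiag _ _ (fun x _ y _ h => Sum.inr_injective h)
        (sym2RestrictP_not_isDiag _ _ _ (G₂.loopless e.1)) hd
    · rw [Sym2.mk_isDiag_iff] at hd
      exact nomatch hd
  edge_finite := by
    have := G₁.edge_finite; have := G₂.edge_finite
    exact inferInstance

/-- Cycle expansion: replace the vertex `u`, of degree `d` with incident edges
enumerated by `ι`, by a cycle on `d'` new vertices `u_0, …, u_{d'-1}`
(`2 ≤ d' ≤ d`); the `i`-th former edge at `u` is attached to `u_i` for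
`i < d' - 1` and to `u_{d'-1}` for `i ≥ d' - 1`, so each of `u_0, …, u_{d'-2}`
receives exactly one of them and `u_{d'-1}` receives the rest. -/
noncomputable def cycleExpand (G : Multigraph V) (u : V) {d d' : ℕ}
    (h2 : 2 ≤ d') (hdd : d' ≤ d)
    (ι : Fin d ≃ {e : G.Edge // u ∈ G.ends e}) :
    Multigraph ({x : V // x ≠ u} ⊕ Fin d') where
  Edge := {e : G.Edge // u ∉ G.ends e} ⊕ (Fin d ⊕ Fin d')
  ends e :=
    match e with
    | .inl e =>
        (sym2RestrictP (· ≠ u) (G.ends e.1) fun x hx hxe => e.2 (hxe ▸ hx)).map Sum.inl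
    | .inr (.inl i) =>
        s(Sum.inr ⟨min i.1 (d' - 1), by omega⟩,
          Sum.inl ⟨Sym2.Mem.other (ι i).2, other_ne (ι i).2⟩)
    | .inr (.inr j) =>
        s(Sum.inr j, Sum.inr ⟨(j.1 + 1) % d', Nat.mod_lt _ (by omega)⟩)
  loopless := by
    rintro (e | i | j) hd
    · exact map_not_isDiag _ _ (fun x _ y _ h => Sum.inl_injective h)
        (sym2RestrictP_not_isDiag _ _ _ (G.loopless e.1)) hd
    · rw [Sym2.mk_isDiag_iff] at hd
      exact nomatch hd
    · rw [Sym2.mk_isDiag_iff] at hd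
      have hj : j.1 < d' := j.2
      have := congrArg Fin.val (Sum.inr_injective hd)
      simp only at this
      rcases Nat.lt_or_ge (j.1 + 1) d' with h | h
      · rw [Nat.mod_eq_of_lt h] at this; omega
      · have hj1 : j.1 + 1 = d' := by omega
        rw [hj1, Nat.mod_self] at this; omega
  edge_finite := by
    have := G.edge_finite
    exact inferInstance

end Multigraph
namespace Multigraph

open scoped Classical

variable {V : Type}

/-- The edges of `G` crossing the vertex bipartition `⟨A, Aᶜ⟩`. -/
def cutEdges (G : Multigraph V) (A : Set V) : Set G.Edge :=
  {e | (∃ x ∈ G.ends e, x ∈ A) ∧ ∃ y ∈ G.ends e, y ∉ A}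

/-- The bipartition `⟨A, Aᶜ⟩` is a minimum edge cut of `G`: both sides are
nonempty and no other bipartition has fewer crossing edges. -/
def IsMinCut (G : Multigraph V) (A : Set V) : Prop :=
  A.Nonempty ∧ Aᶜ.Nonempty ∧
    ∀ B : Set V, B.Nonempty → Bᶜ.Nonempty →
      (G.cutEdges A).ncard ≤ (G.cutEdges B).ncard

/-- One side of a vertex splitting: keep the side `A` of the cut `⟨A, Aᶜ⟩`,
delete the other side, and reattach each cut edge to a single new vertex
(`none`). -/
noncomputable def splitSide (G : Multigraph V) (A : Set V) :
    Multigraph (Option {x : V // x ∈ A}) where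
  Edge := {e : G.Edge // ∀ x ∈ G.ends e, x ∈ A} ⊕ {e : G.Edge // e ∈ G.cutEdges A}
  ends e :=
    match e with
    | .inl e => (sym2RestrictP (· ∈ A) (G.ends e.1) e.2).map some
    | .inr e =>
        s(none, some ⟨Classical.choose e.2.1, (Classical.choose_spec e.2.1).2⟩)
  loopless := by
    rintro (e | e) hd
    · exact map_not_isDiag _ _ (fun x _ y _ h => Option.some_injective _ h)
        (sym2RestrictP_not_isDiag _ _ _ (G.loopless e.1)) hd
    · rw [Sym2.mk_isDiag_iff] at hd
      exact nomatch hd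
  edge_finite := by
    have := G.edge_finite
    exact inferInstance

/-- The dumbbell graph: two vertices joined by three parallel edges. -/
def dumbbell : Multigraph (Fin 2) where
  Edge := Fin 3
  ends _ := s(0, 1)
  loopless := fun _ h => absurd (Sym2.mk_isDiag_iff.mp h) (by decide)
  edge_finite := inferInstance

/-- `B` is (the vertex set of) a block of `G`: a maximal set of vertices
inducing a connected, 2-vertex-connected subgraph. -/
def IsBlock (G : Multigraph V) (B : Set V) : Prop :=
  (G.induce B).Biconnected ∧
    ∀ B' : Set V, B ⊆ B' → (G.induce B').Biconnected → B' = B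

/-- The set of double edges of `G`, as unordered pairs of distinct parallel
edges. -/
def doubleEdges (G : Multigraph V) : Set (Sym2 G.Edge) :=
  {z | ∃ e f : G.Edge, z = s(e, f) ∧ e ≠ f ∧ G.ends e = G.ends f}

/-- A collapsible cycle: a chordless, non-articulation cycle, all but at most
one of whose vertices have degree 3, whose contraction to a single vertex
yields an exactly 3-edge-connected multigraph. -/
def IsCollapsible {G : Multigraph V} {v : V} (p : G.Walk v v) : Prop :=
  IsCycle p ∧ IsChordless p ∧
    (G.componentsAvoiding {x | x ∈ p.support}).Subsingleton ∧
    {x : V | x ∈ p.support ∧ G.degree x ≠ 3}.Subsingleton ∧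
    (G.contractSet {x | x ∈ p.support}).ExactlyEdgeConnected 3

end Multigraph
namespace Multigraph

open scoped Classical

variable {V : Type}

/-- Smooth out the degree-two vertex `x` (whose two incident edges are
`e₁ = (x, a)` and `e₂ = (x, b)`): delete `x`, `e₁` and `e₂` and add a single
new edge joining `a` and `b`. -/
noncomputable def smoothAt {S : Set V} (H : Multigraph ↥S) (x a b : ↥S)
    (e₁ e₂ : H.Edge) (hne : e₁ ≠ e₂)
    (h₁ : H.ends e₁ = s(x, a)) (h₂ : H.ends e₂ = s(x, b))
    (hax : a ≠ x) (hbx : b ≠ x) (hab : a ≠ b)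
    (hdeg : ∀ e : H.Edge, x ∈ H.ends e → e = e₁ ∨ e = e₂) :
    Multigraph ↥(S \ {(x : V)}) where
  Edge := {e : H.Edge // e ≠ e₁ ∧ e ≠ e₂} ⊕ Unit
  ends e :=
    match e with
    | .inl e =>
        (sym2RestrictP (fun y : ↥S => y ≠ x) (H.ends e.1)
            (fun y hy hyx => by
              subst hyx
              rcases hdeg e.1 hy with h | h
              exacts [e.2.1 h, e.2.2 h])).map
          fun y => ⟨y.1.1, y.1.2, fun hh => y.2 (Subtype.ext hh)⟩
    | .inr _ =>
        s(⟨a.1, a.2, fun hh => hax (Subtype.ext hh)⟩,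
          ⟨b.1, b.2, fun hh => hbx (Subtype.ext hh)⟩)
  loopless := by
    rintro (e | e) hd
    · refine map_not_isDiag _ _ (fun y _ z _ h => ?_)
        (sym2RestrictP_not_isDiag _ _ _ (H.loopless e.1)) hd
      have hv := Subtype.ext_iff.mp h
      exact Subtype.ext (Subtype.ext hv)
    · rw [Sym2.mk_isDiag_iff] at hd
      have hv := Subtype.ext_iff.mp hd
      exact hab (Subtype.ext hv)
  edge_finite := by
    have := H.edge_finite
    exact inferInstance

/-- `SmoothSeq H K` : the multigraph `K` is obtained from `H` by a finite
sequence of smoothings of degree-two vertices. -/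
inductive SmoothSeq {V : Type} : ∀ {S T : Set V}, Multigraph ↥S → Multigraph ↥T → Prop
  | refl {S : Set V} (H : Multigraph ↥S) : SmoothSeq H H
  | step {S T : Set V} {H : Multigraph ↥S} {K : Multigraph ↥T}
      (x a b : ↥S) (e₁ e₂ : H.Edge) (hne : e₁ ≠ e₂)
      (h₁ : H.ends e₁ = s(x, a)) (h₂ : H.ends e₂ = s(x, b))
      (hax : a ≠ x) (hbx : b ≠ x) (hab : a ≠ b)
      (hdeg : ∀ e : H.Edge, x ∈ H.ends e → e = e₁ ∨ e = e₂) :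
      SmoothSeq (smoothAt H x a b e₁ e₂ hne h₁ h₂ hax hbx hab hdeg) K → SmoothSeq H K

/-- `G` is a 3-thick tree: it is obtained from a tree by replacing every tree
edge by three parallel edges. -/
def IsThreeThickTree (G : Multigraph V) : Prop :=
  ∃ T : SimpleGraph V, T.IsTree ∧
    ∃ f : G.Edge ≃ T.edgeSet × Fin 3, ∀ e : G.Edge, G.ends e = ((f e).1 : Sym2 V)

/-- The graphs obtainable from dumbbell graphs by cycle expansions and block
gluings (up to isomorphism). -/
inductive Synth3 : ∀ {V : Type}, Multigraph V → Prop
  | dumbbell : Synth3 dumbbell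
  | glue {V₁ V₂ : Type} {G₁ : Multigraph V₁} {G₂ : Multigraph V₂} (u₁ : V₁) (u₂ : V₂) :
      Synth3 G₁ → Synth3 G₂ → Synth3 (blockGlue G₁ G₂ u₁ u₂)
  | expand {V : Type} {G : Multigraph V} (u : V) {d d' : ℕ} (h2 : 2 ≤ d') (hdd : d' ≤ d)
      (ι : Fin d ≃ {e : G.Edge // u ∈ G.ends e}) :
      Synth3 G → Synth3 (G.cycleExpand u h2 hdd ι)
  | iso {V W : Type} {G : Multigraph V} {H : Multigraph W} :
      Synth3 G → Iso G H → Synth3 H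

/-- The graphs obtainable from 3-thick trees by block-respecting cycle
expansions (cycle expansions whose new cycle lies inside a single block of the
resulting graph), up to isomorphism. -/
inductive BRSynth : ∀ {V : Type}, Multigraph V → Prop
  | base {V : Type} {G : Multigraph V} : IsThreeThickTree G → BRSynth G
  | expand {V : Type} {G : Multigraph V} (u : V) {d d' : ℕ} (h2 : 2 ≤ d') (hdd : d' ≤ d)
      (ι : Fin d ≃ {e : G.Edge // u ∈ G.ends e})
      (hblock : ∃ B : Set ({x : V // x ≠ u} ⊕ Fin d'),
        (G.cycleExpand u h2 hdd ι).IsBlock B ∧ ∀ j : Fin d', Sum.inr j ∈ B) :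
      BRSynth G → BRSynth (G.cycleExpand u h2 hdd ι)
  | iso {V W : Type} {G : Multigraph V} {H : Multigraph W} :
      BRSynth G → Iso G H → BRSynth H

end Multigraph
namespace Multigraph


/-!
By Menger's theorem, proved here by augmenting unit flows, `G` is exactly `k`-edge-connected
iff every cut separating two vertices has at least `k` edges and some such cut has at most `k`.

Collapsing the new cycle back to `u` pulls every cut of `G` back to a cut of the expansion with
the same edges. This gives the upper bound for two vertices not both on the cycle; two cycle
vertices are separated by the three edges at one of them, since all but one cycle vertex has
degree three. For the lower bound, a cut that keeps the whole cycle on one side is such a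
pull-back, and a cut that splits the cycle contains two cycle edges and an edge off the cycle,
which exists because `G - u` is connected.
-/

open scoped Classical

variable {V : Type} {G : Multigraph V}

noncomputable instance (G : Multigraph V) : Fintype G.Edge := Fintype.ofFinite _

/-- An arc is an edge `e` with a direction `c : Bool`; it runs from `G.tail e c` to
`G.head e c`. -/
noncomputable def tail (G : Multigraph V) (e : G.Edge) : Bool → V
  | true => (exists_pair_eq (G.ends e)).choose
  | false => (exists_pair_eq (G.ends e)).choose_spec.choose

noncomputable def head (G : Multigraph V) (e : G.Edge) (c : Bool) : V := G.tail e (!c)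

lemma ends_eq_tail_head (e : G.Edge) (c : Bool) : G.ends e = s(G.tail e c, G.head e c) := by
  have h := (exists_pair_eq (G.ends e)).choose_spec.choose_spec
  cases c
  · rw [Sym2.eq_swap]; exact h
  · exact h

lemma mem_cutEdges_iff_of_ends_eq {e : G.Edge} {x y : V} (he : G.ends e = s(x, y))
    (S : Set V) : e ∈ G.cutEdges S ↔ (x ∈ S ∧ y ∉ S) ∨ (y ∈ S ∧ x ∉ S) := by
  simp only [cutEdges, Set.mem_ofPred_eq, he, Sym2.mem_iff, exists_eq_or_imp, exists_eq_left]
  tauto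

lemma cutEdges_compl (S : Set V) : G.cutEdges Sᶜ = G.cutEdges S := by
  ext e
  simp only [cutEdges, Set.mem_ofPred_eq, Set.mem_compl_iff, not_not]
  tauto

lemma exists_tail_mem_head_not_mem {e : G.Edge} {S : Set V} (he : e ∈ G.cutEdges S) :
    ∃ c, G.tail e c ∈ S ∧ G.head e c ∉ S := by
  rcases (mem_cutEdges_iff_of_ends_eq (ends_eq_tail_head e true) S).1 he with h | h
  · exact ⟨true, h⟩
  · exact ⟨false, by simpa [head] using h⟩

lemma mem_cutEdges_preimage_iff {W : Type} {H : Multigraph W} {π : W → V} {ε : H.Edge}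
    {e : G.Edge} (h : (H.ends ε).map π = G.ends e) (B : Set V) :
    ε ∈ H.cutEdges (π ⁻¹' B) ↔ e ∈ G.cutEdges B := by
  simp [cutEdges, ← h, Sym2.mem_map]

lemma mem_cutEdges_congr {e : G.Edge} {S T : Set V} (h : ∀ x ∈ G.ends e, x ∈ S ↔ x ∈ T) :
    e ∈ G.cutEdges S ↔ e ∈ G.cutEdges T := by
  simp only [cutEdges, Set.mem_ofPred_eq]
  constructor
  · rintro ⟨⟨x, hx, hxS⟩, ⟨y, hy, hyS⟩⟩
    exact ⟨⟨x, hx, (h x hx).1 hxS⟩, ⟨y, hy, fun hyT => hyS ((h y hy).2 hyT)⟩⟩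
  · rintro ⟨⟨x, hx, hxT⟩, ⟨y, hy, hyT⟩⟩
    exact ⟨⟨x, hx, (h x hx).2 hxT⟩, ⟨y, hy, fun hyS => hyT ((h y hy).1 hyS)⟩⟩

namespace Walk

lemma start_mem_support {x y : V} (p : G.Walk x y) : x ∈ p.support := by
  cases p <;> simp [support]

lemma mem_support_of_mem_edges {x y : V} (p : G.Walk x y) {e : G.Edge}
    (he : e ∈ p.edges) {w : V} (hw : w ∈ G.ends e) : w ∈ p.support := by
  induction p with
  | nil v => simp [edges] at he
  | cons e' he' p ih =>
    simp only [edges, List.mem_cons] at he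
    simp only [support, List.mem_cons]
    rcases he with rfl | he
    · rw [he', Sym2.mem_iff] at hw
      rcases hw with rfl | rfl
      · exact Or.inl rfl
      · exact Or.inr (start_mem_support p)
    · exact Or.inr (ih he)

lemma edges_nodup_of_support_nodup {x y : V} (p : G.Walk x y) (hp : p.support.Nodup) :
    p.edges.Nodup := by
  induction p with
  | nil v => simp [edges]
  | cons e he p ih =>
    simp only [support, List.nodup_cons] at hp
    refine List.nodup_cons.2 ⟨fun hmem => hp.1 ?_, ih hp.2⟩
    exact mem_support_of_mem_edges p hmem (by rw [he]; exact Sym2.mem_mk_left _ _)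

lemma exists_mem_edges_mem_cutEdges {x y : V} (p : G.Walk x y) {S : Set V}
    (hx : x ∈ S) (hy : y ∉ S) : ∃ e ∈ p.edges, e ∈ G.cutEdges S := by
  induction p with
  | nil v => exact absurd hx hy
  | @cons a v w e he p ih =>
    by_cases hv : v ∈ S
    · obtain ⟨f, hf, hcut⟩ := ih hv hy
      exact ⟨f, List.mem_cons_of_mem _ hf, hcut⟩
    · exact ⟨e, List.mem_cons_self, (mem_cutEdges_iff_of_ends_eq he S).2 (Or.inl ⟨hx, hv⟩)⟩

end Walk

lemma ConnectedOn.exists_mem_cutEdges {T S : Set V} (hT : G.ConnectedOn T) {a b : V}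
    (ha : a ∈ T) (hb : b ∈ T) (haS : a ∈ S) (hbS : b ∉ S) :
    ∃ e ∈ G.cutEdges S, ∀ x ∈ G.ends e, x ∈ T := by
  obtain ⟨p, hp⟩ := hT a ha b hb
  obtain ⟨e, hep, he⟩ := p.exists_mem_edges_mem_cutEdges haS hbS
  exact ⟨e, he, fun x hx => hp x (p.mem_support_of_mem_edges hep hx)⟩

theorem le_ncard_cutEdges_of_hasEDP {a b : V} {k : ℕ} (h : G.HasEDP a b k) {S : Set V}
    (ha : a ∈ S) (hb : b ∉ S) : k ≤ (G.cutEdges S).ncard := by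
  obtain ⟨P, -, hdisj⟩ := h
  choose f hfP hfS using fun i => (P i).exists_mem_edges_mem_cutEdges ha hb
  have hinj : Function.Injective fun i => (⟨f i, hfS i⟩ : G.cutEdges S) := by
    intro i j hij
    by_contra hne
    have hfij : f i = f j := congrArg Subtype.val hij
    exact hdisj i j hne (f i) (hfP i) (hfij ▸ hfP j)
  calc k = Nat.card (Fin k) := (Nat.card_eq_fintype_card.trans (Fintype.card_fin k)).symm
    _ ≤ Nat.card (G.cutEdges S) := Nat.card_le_card_of_injective _ hinj
    _ = (G.cutEdges S).ncard := Nat.card_coe_set_eq _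

inductive ArcWalk (G : Multigraph V) (P : G.Edge → Bool → Prop) : V → V → Type
  | nil (v : V) : ArcWalk G P v v
  | cons {x y z : V} (e : G.Edge) (c : Bool) (hP : P e c) (ht : G.tail e c = x)
      (hh : G.head e c = y) (p : ArcWalk G P y z) : ArcWalk G P x z

namespace ArcWalk

variable {P : G.Edge → Bool → Prop}

def toWalk : ∀ {x y : V}, G.ArcWalk P x y → G.Walk x y
  | _, _, nil v => Walk.nil v
  | _, _, cons e c _ ht hh p => Walk.cons e (by rw [ends_eq_tail_head e c, ht, hh]) p.toWalk

lemma exists_support_suffix {x y : V} (p : G.ArcWalk P x y) {v : V}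
    (hv : v ∈ p.toWalk.support) :
    ∃ q : G.ArcWalk P v y, q.toWalk.support <:+ p.toWalk.support := by
  induction p with
  | nil w =>
    obtain rfl : v = w := by simpa [toWalk, Walk.support] using hv
    exact ⟨nil v, List.suffix_refl _⟩
  | @cons x y z e c hP ht hh p ih =>
    by_cases hvx : v = x
    · subst hvx
      exact ⟨cons e c hP ht hh p, List.suffix_refl _⟩
    · have hv' : v ∈ p.toWalk.support := by simpa [toWalk, Walk.support, hvx] using hv
      obtain ⟨q, hq⟩ := ih hv'
      exact ⟨q, hq.trans (List.suffix_cons _ _)⟩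

lemma exists_support_nodup {x y : V} (p : G.ArcWalk P x y) :
    ∃ q : G.ArcWalk P x y, q.toWalk.support.Nodup := by
  induction p with
  | nil v => exact ⟨nil v, by simp [toWalk, Walk.support]⟩
  | @cons x y z e c hP ht hh p ih =>
    obtain ⟨q, hq⟩ := ih
    by_cases hx : x ∈ q.toWalk.support
    · obtain ⟨r, hr⟩ := exists_support_suffix q hx
      exact ⟨r, hr.sublist.nodup hq⟩
    · exact ⟨cons e c hP ht hh q, by simp [toWalk, Walk.support, hq, hx]⟩

/-- The closed set is the set of vertices from which `b` cannot be reached. -/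
lemma exists_path_or_closed_cut (P : G.Edge → Bool → Prop) (a b : V) :
    (∃ p : G.ArcWalk P a b, p.toWalk.support.Nodup) ∨
      ∃ S : Set V, a ∈ S ∧ b ∉ S ∧
        ∀ e c, P e c → G.tail e c ∈ S → G.head e c ∈ S := by
  by_cases h : Nonempty (G.ArcWalk P a b)
  · exact Or.inl (exists_support_nodup h.some)
  refine Or.inr ⟨{z | IsEmpty (G.ArcWalk P z b)}, not_nonempty_iff.1 h,
    fun hb => hb.false (nil b), fun e c hP ht => ?_⟩
  by_contra hh
  exact ht.false (cons e c hP rfl rfl (not_isEmpty_iff.1 hh).some)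

end ArcWalk

noncomputable def crossSign (S : Set V) (x y : V) : ℤ :=
  (if x ∈ S then 1 else 0) - (if y ∈ S then 1 else 0)

/-- A flow `f` assigns `f e` to the arc `(e, true)`, hence `-f e` to `(e, false)`. -/
def arcFlow (f : G.Edge → ℤ) (e : G.Edge) (c : Bool) : ℤ := if c then f e else -f e

noncomputable def flowOut (G : Multigraph V) (f : G.Edge → ℤ) (S : Set V) : ℤ :=
  ∑ e, f e * crossSign S (G.tail e true) (G.head e true)

/-- An integral `a`-`b` flow of value `k` with unit capacities. Conservation is imposed on every
vertex set rather than on single vertices, which is equivalent and makes the value across any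
cut immediate. -/
def IsFlow (G : Multigraph V) (f : G.Edge → ℤ) (a b : V) (k : ℤ) : Prop :=
  (∀ e c, arcFlow f e c ≤ 1) ∧ ∀ S, G.flowOut f S = k * crossSign S a b

lemma crossSign_eq_one {S : Set V} {x y : V} (hx : x ∈ S) (hy : y ∉ S) :
    crossSign S x y = 1 := by
  simp [crossSign, hx, hy]

lemma arcFlow_not (f : G.Edge → ℤ) (e : G.Edge) (c : Bool) :
    arcFlow f e (!c) = -arcFlow f e c := by
  cases c <;> simp [arcFlow]

lemma arcFlow_add (f g : G.Edge → ℤ) (e : G.Edge) (c : Bool) :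
    arcFlow (f + g) e c = arcFlow f e c + arcFlow g e c := by
  cases c <;> simp [arcFlow]
  ring

lemma arcFlow_sub (f g : G.Edge → ℤ) (e : G.Edge) (c : Bool) :
    arcFlow (f - g) e c = arcFlow f e c - arcFlow g e c := by
  cases c <;> simp [arcFlow]
  ring

lemma arcFlow_eq_zero_iff {f : G.Edge → ℤ} {e : G.Edge} {c : Bool} :
    arcFlow f e c = 0 ↔ f e = 0 := by
  cases c <;> simp [arcFlow]

lemma mul_crossSign_eq (f : G.Edge → ℤ) (e : G.Edge) (c : Bool) (S : Set V) :
    f e * crossSign S (G.tail e true) (G.head e true) =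
      arcFlow f e c * crossSign S (G.tail e c) (G.head e c) := by
  cases c
  · simp [arcFlow, crossSign, head]; ring
  · simp [arcFlow]

lemma crossSign_eq_zero_of_not_mem_cutEdges {e : G.Edge} {S : Set V} (he : e ∉ G.cutEdges S) :
    crossSign S (G.tail e true) (G.head e true) = 0 := by
  rw [mem_cutEdges_iff_of_ends_eq (ends_eq_tail_head e true)] at he
  by_cases h : G.tail e true ∈ S <;> simp_all [crossSign]

lemma exists_mul_crossSign_eq_arcFlow {e : G.Edge} {S : Set V} (he : e ∈ G.cutEdges S)
    (f : G.Edge → ℤ) : ∃ c, G.tail e c ∈ S ∧ G.head e c ∉ S ∧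
      f e * crossSign S (G.tail e true) (G.head e true) = arcFlow f e c := by
  obtain ⟨c, hc, hc'⟩ := exists_tail_mem_head_not_mem he
  exact ⟨c, hc, hc', by rw [mul_crossSign_eq f e c, crossSign_eq_one hc hc', mul_one]⟩

lemma flowOut_add (f g : G.Edge → ℤ) (S : Set V) :
    G.flowOut (f + g) S = G.flowOut f S + G.flowOut g S := by
  simp [flowOut, add_mul, Finset.sum_add_distrib]

lemma flowOut_sub (f g : G.Edge → ℤ) (S : Set V) :
    G.flowOut (f - g) S = G.flowOut f S - G.flowOut g S := by
  simp [flowOut, sub_mul, Finset.sum_sub_distrib]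

noncomputable def arcUnit (e : G.Edge) (c : Bool) : G.Edge → ℤ :=
  Pi.single e (if c then 1 else -1)

lemma flowOut_arcUnit (e : G.Edge) (c : Bool) (S : Set V) :
    G.flowOut (arcUnit e c) S = crossSign S (G.tail e c) (G.head e c) := by
  rw [flowOut, Finset.sum_eq_single e (fun e' _ he' => by simp [arcUnit, he'])
    (by simp), mul_crossSign_eq _ e c]
  cases c <;> simp [arcUnit, arcFlow]

/-- Every arc leaving `S` is saturated, so each cut edge contributes at least `1` to the
outflow. -/
lemma ncard_cutEdges_le_flowOut {f : G.Edge → ℤ} {S : Set V}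
    (hS : ∀ e c, arcFlow f e c < 1 → G.tail e c ∈ S → G.head e c ∈ S) :
    ((G.cutEdges S).ncard : ℤ) ≤ G.flowOut f S := by
  have hcut : (G.cutEdges S).toFinset = Finset.univ.filter (· ∈ G.cutEdges S) := by ext; simp
  rw [Set.ncard_eq_toFinset_card', hcut, ← Finset.sum_boole]
  refine Finset.sum_le_sum fun e _ => ?_
  split_ifs with he
  · obtain ⟨c, hc, hc', heq⟩ := exists_mul_crossSign_eq_arcFlow he f
    rw [heq]
    exact not_lt.1 fun h => hc' (hS e c h hc)
  · rw [crossSign_eq_zero_of_not_mem_cutEdges he, mul_zero]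

lemma flowOut_nonpos {f : G.Edge → ℤ} {S : Set V}
    (hS : ∀ e c, 0 < arcFlow f e c → G.tail e c ∈ S → G.head e c ∈ S) :
    G.flowOut f S ≤ 0 := by
  refine Finset.sum_nonpos fun e _ => ?_
  by_cases he : e ∈ G.cutEdges S
  · obtain ⟨c, hc, hc', heq⟩ := exists_mul_crossSign_eq_arcFlow he f
    rw [heq]
    exact not_lt.1 fun h => hc' (hS e c h hc)
  · rw [crossSign_eq_zero_of_not_mem_cutEdges he, mul_zero]

namespace ArcWalk

variable {P : G.Edge → Bool → Prop}

noncomputable def flow : ∀ {x y : V}, G.ArcWalk P x y → G.Edge → ℤ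
  | _, _, nil _ => 0
  | _, _, cons e c _ _ _ p => arcUnit e c + p.flow

lemma flowOut_flow {x y : V} (p : G.ArcWalk P x y) (S : Set V) :
    G.flowOut p.flow S = crossSign S x y := by
  induction p with
  | nil v => simp [flow, flowOut, crossSign]
  | cons e c hP ht hh p ih =>
    rw [flow, flowOut_add, ih, flowOut_arcUnit, ht, hh]
    simp only [crossSign]
    ring

lemma flow_eq_zero_of_not_mem {x y : V} (p : G.ArcWalk P x y) {e : G.Edge}
    (he : e ∉ p.toWalk.edges) : p.flow e = 0 := by
  induction p with
  | nil v => rfl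
  | cons e' c hP ht hh p ih =>
    simp only [toWalk, Walk.edges, List.mem_cons, not_or] at he
    simp [flow, arcUnit, he.1, ih he.2]

lemma exists_arcFlow_flow_eq_one {x y : V} (p : G.ArcWalk P x y) (hp : p.toWalk.edges.Nodup)
    {e : G.Edge} (he : e ∈ p.toWalk.edges) : ∃ c, P e c ∧ arcFlow p.flow e c = 1 := by
  induction p with
  | nil v => simp [toWalk, Walk.edges] at he
  | cons e' c hP ht hh p ih =>
    simp only [toWalk, Walk.edges, List.nodup_cons, List.mem_cons] at hp he
    rcases he with rfl | he
    · refine ⟨c, hP, ?_⟩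
      cases c <;> simp [flow, arcFlow, arcUnit, flow_eq_zero_of_not_mem p hp.1]
    · obtain ⟨c', hc', hflow⟩ := ih hp.2 he
      have hne : e ≠ e' := fun h => hp.1 (h ▸ he)
      refine ⟨c', hc', ?_⟩
      rw [flow, arcFlow_add, hflow]
      cases c' <;> simp [arcFlow, arcUnit, hne]

end ArcWalk

namespace IsFlow

variable {f : G.Edge → ℤ} {a b : V} {k : ℤ}

lemma zero (a b : V) : G.IsFlow 0 a b 0 :=
  ⟨fun e c => by cases c <;> simp [arcFlow], fun S => by simp [flowOut]⟩

lemma augment (hf : G.IsFlow f a b k) (p : G.ArcWalk (fun e c => arcFlow f e c < 1) a b)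
    (hp : p.toWalk.edges.Nodup) : G.IsFlow (f + p.flow) a b (k + 1) := by
  refine ⟨fun e c' => ?_, fun S => by rw [flowOut_add, hf.2, p.flowOut_flow]; ring⟩
  rw [arcFlow_add]
  by_cases he : e ∈ p.toWalk.edges
  · obtain ⟨c, hc, hflow⟩ := p.exists_arcFlow_flow_eq_one hp he
    rcases Bool.eq_or_eq_not c' c with rfl | rfl
    · omega
    · rw [arcFlow_not p.flow, hflow]
      linarith [hf.1 e (!c)]
  · rw [arcFlow_eq_zero_iff.2 (p.flow_eq_zero_of_not_mem he)]
    linarith [hf.1 e c']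

lemma sub_path (hf : G.IsFlow f a b k) (p : G.ArcWalk (fun e c => 0 < arcFlow f e c) a b)
    (hp : p.toWalk.edges.Nodup) :
    G.IsFlow (f - p.flow) a b (k - 1) ∧
      ∀ e, (f - p.flow) e ≠ 0 → f e ≠ 0 ∧ e ∉ p.toWalk.edges := by
  have hoff : ∀ e, e ∉ p.toWalk.edges → (f - p.flow) e = f e := fun e he => by
    simp [p.flow_eq_zero_of_not_mem he]
  have hon : ∀ e ∈ p.toWalk.edges, ∃ c, arcFlow (f - p.flow) e c = 0 := fun e he => by
    obtain ⟨c, hc, hflow⟩ := p.exists_arcFlow_flow_eq_one hp he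
    exact ⟨c, by rw [arcFlow_sub, hflow]; linarith [hf.1 e c]⟩
  refine ⟨⟨fun e c' => ?_, fun S => by rw [flowOut_sub, hf.2, p.flowOut_flow]; ring⟩,
    fun e he => ?_⟩
  · by_cases he : e ∈ p.toWalk.edges
    · obtain ⟨c, hc⟩ := hon e he
      rcases Bool.eq_or_eq_not c' c with rfl | rfl
      · omega
      · rw [arcFlow_not, hc]; omega
    · have := hf.1 e c'
      cases c' <;> simp_all [arcFlow]
  · by_cases hmem : e ∈ p.toWalk.edges
    · obtain ⟨c, hc⟩ := hon e hmem
      exact absurd (arcFlow_eq_zero_iff.1 hc) he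
    · exact ⟨by rwa [← hoff e hmem], hmem⟩

end IsFlow

section Menger

variable {a b : V}

lemma IsFlow.exists_trails : ∀ (k : ℕ) {f : G.Edge → ℤ}, G.IsFlow f a b k →
    ∃ P : Fin k → G.Walk a b, (∀ i, (P i).edges.Nodup) ∧
      (∀ i j, i ≠ j → ∀ e, e ∈ (P i).edges → e ∉ (P j).edges) ∧
      ∀ i, ∀ e ∈ (P i).edges, f e ≠ 0
  | 0, _, _ => ⟨Fin.elim0, fun i => i.elim0, fun i => i.elim0, fun i => i.elim0⟩
  | k + 1, f, hf => by
    rcases ArcWalk.exists_path_or_closed_cut (fun e c => 0 < arcFlow f e c) a b with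
      ⟨p, hp⟩ | ⟨S, ha, hb, hS⟩
    swap
    · have hout := flowOut_nonpos hS
      rw [hf.2 S, crossSign_eq_one ha hb] at hout
      omega
    have hpe := p.toWalk.edges_nodup_of_support_nodup hp
    obtain ⟨hf', hsupp⟩ := hf.sub_path p hpe
    obtain ⟨Q, hQnd, hQdisj, hQsupp⟩ := exists_trails k (by simpa using hf')
    have hQp : ∀ i, ∀ e ∈ (Q i).edges, e ∉ p.toWalk.edges := fun i e he =>
      (hsupp e (hQsupp i e he)).2
    refine ⟨Fin.cons p.toWalk Q, Fin.cases hpe hQnd, ?_, Fin.cases ?_ ?_⟩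
    · intro i j hij e hi hj
      rcases Fin.eq_zero_or_eq_succ i with rfl | ⟨i, rfl⟩ <;>
        rcases Fin.eq_zero_or_eq_succ j with rfl | ⟨j, rfl⟩
      · exact hij rfl
      · exact hQp j e hj hi
      · exact hQp i e hi hj
      · exact hQdisj i j (fun h => hij (congrArg Fin.succ h)) e hi hj
    · intro e he
      obtain ⟨c, hc, -⟩ := p.exists_arcFlow_flow_eq_one hpe he
      exact fun h => hc.ne' (arcFlow_eq_zero_iff.2 h)
    · exact fun i e he => (hsupp e (hQsupp i e he)).1

lemma exists_isFlow_of_forall_le_ncard_cutEdges {k : ℕ}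
    (hcut : ∀ S : Set V, a ∈ S → b ∉ S → k ≤ (G.cutEdges S).ncard) :
    ∀ j ≤ k, ∃ f, G.IsFlow f a b j
  | 0, _ => ⟨0, IsFlow.zero a b⟩
  | j + 1, hj => by
    obtain ⟨f, hf⟩ := exists_isFlow_of_forall_le_ncard_cutEdges hcut j (by omega)
    rcases ArcWalk.exists_path_or_closed_cut (fun e c => arcFlow f e c < 1) a b with
      ⟨p, hp⟩ | ⟨S, ha, hb, hS⟩
    · exact ⟨_, by simpa using hf.augment p (p.toWalk.edges_nodup_of_support_nodup hp)⟩
    · have hout := ncard_cutEdges_le_flowOut hS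
      rw [hf.2 S, crossSign_eq_one ha hb] at hout
      have := hcut S ha hb
      omega

/-- Menger's theorem, edge version. -/
theorem hasEDP_iff_forall_le_ncard_cutEdges {k : ℕ} :
    G.HasEDP a b k ↔ ∀ S : Set V, a ∈ S → b ∉ S → k ≤ (G.cutEdges S).ncard := by
  refine ⟨fun h S ha hb => le_ncard_cutEdges_of_hasEDP h ha hb, fun hcut => ?_⟩
  obtain ⟨f, hf⟩ := exists_isFlow_of_forall_le_ncard_cutEdges hcut k le_rfl
  obtain ⟨P, hnd, hdisj, -⟩ := hf.exists_trails k
  exact ⟨P, hnd, hdisj⟩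

theorem exactlyEdgeConnected_iff {k : ℕ} :
    G.ExactlyEdgeConnected k ↔ Nontrivial V ∧ ∀ x y : V, x ≠ y →
      (∀ S : Set V, x ∈ S → y ∉ S → k ≤ (G.cutEdges S).ncard) ∧
        ∃ S : Set V, x ∈ S ∧ y ∉ S ∧ (G.cutEdges S).ncard ≤ k := by
  simp only [ExactlyEdgeConnected, hasEDP_iff_forall_le_ncard_cutEdges, not_forall, not_le,
    Nat.lt_succ_iff, exists_prop]

end Menger

open Fin.NatCast in
lemma _root_.Fin.exists_pred_and_not_pred_add_one {n : ℕ} [NeZero n] (χ : Fin n → Prop)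
    {i j : Fin n} (hi : χ i) (hj : ¬ χ j) : ∃ m, χ m ∧ ¬ χ (m + 1) := by
  by_contra! h
  have key : ∀ t : ℕ, χ (i + t) := by
    intro t
    induction t with
    | zero => simpa using hi
    | succ t ih => simpa [add_assoc] using h _ ih
  exact hj (by simpa using key (j - i).val)

lemma sym2RestrictP_map_val {α : Type} (P : α → Prop) (z : Sym2 α) (h : ∀ x ∈ z, P x) :
    (sym2RestrictP P z h).map Subtype.val = z := by
  obtain ⟨x, y, rfl⟩ := exists_pair_eq z
  simp [sym2RestrictP, h x (Sym2.mem_mk_left x y), h y (Sym2.mem_mk_right x y)]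

def contractCycle (u : V) {d' : ℕ} : {x : V // x ≠ u} ⊕ Fin d' → V :=
  Sum.elim Subtype.val fun _ => u

lemma inl_mem_preimage_image_contractCycle {u : V} {d' : ℕ}
    {S : Set ({x : V // x ≠ u} ⊕ Fin d')} (a : {x : V // x ≠ u}) :
    (Sum.inl a : {x : V // x ≠ u} ⊕ Fin d') ∈ contractCycle u ⁻¹' (contractCycle u '' S)
      ↔ Sum.inl a ∈ S := by
  refine ⟨fun ⟨w, hw, hwa⟩ => ?_, fun h => ⟨_, h, rfl⟩⟩
  rcases w with b | j
  · obtain rfl : b = a := Subtype.ext hwa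
    exact hw
  · exact absurd hwa.symm a.2

lemma preimage_image_contractCycle {u : V} {d' : ℕ} {S : Set ({x : V // x ≠ u} ⊕ Fin d')}
    (hS : ∀ j, Sum.inr j ∈ S) : contractCycle u ⁻¹' (contractCycle u '' S) = S := by
  ext (a | j)
  · exact inl_mem_preimage_image_contractCycle a
  · exact ⟨fun _ => hS j, fun h => ⟨_, h, rfl⟩⟩

/-- The edge of the new cycle joining `u_j` to `u_{j+1}`. -/
def cycleEdge {G : Multigraph V} {u : V} {d d' : ℕ} {h2 : 2 ≤ d'} {hdd : d' ≤ d}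
    {ι : Fin d ≃ {e : G.Edge // u ∈ G.ends e}} (j : Fin d') :
    (G.cycleExpand u h2 hdd ι).Edge :=
  .inr (.inr j)

/-- The edge of the expansion replacing the `i`-th edge at `u`. -/
def pendantEdge {G : Multigraph V} {u : V} {d d' : ℕ} {h2 : 2 ≤ d'} {hdd : d' ≤ d}
    {ι : Fin d ≃ {e : G.Edge // u ∈ G.ends e}} (i : Fin d) :
    (G.cycleExpand u h2 hdd ι).Edge :=
  .inr (.inl i)

section CycleExpand

variable (G) (u : V) {d d' : ℕ} (h2 : 2 ≤ d') (hdd : d' ≤ d)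
  (ι : Fin d ≃ {e : G.Edge // u ∈ G.ends e})

lemma map_ends_cycleExpand_inl (e : {e : G.Edge // u ∉ G.ends e}) :
    ((G.cycleExpand u h2 hdd ι).ends (.inl e)).map (contractCycle u) = G.ends e := by
  simp only [cycleExpand, Sym2.map_map]
  exact sym2RestrictP_map_val _ _ _

lemma map_ends_pendantEdge (i : Fin d) :
    ((G.cycleExpand u h2 hdd ι).ends (pendantEdge i)).map (contractCycle u) = G.ends (ι i) := by
  simp only [cycleExpand]
  exact Sym2.other_spec (ι i).2

lemma ends_cycleEdge [NeZero d'] (j : Fin d') :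
    (G.cycleExpand u h2 hdd ι).ends (cycleEdge j) = s(.inr j, .inr (j + 1)) := by
  have hsucc : (⟨(j.1 + 1) % d', Nat.mod_lt _ (by omega)⟩ : Fin d') = j + 1 :=
    Fin.ext (by simp [Fin.val_add])
  simp only [cycleEdge, cycleExpand, hsucc]

noncomputable def liftEdge (e : G.Edge) : (G.cycleExpand u h2 hdd ι).Edge :=
  if h : u ∈ G.ends e then pendantEdge (ι.symm ⟨e, h⟩) else .inl ⟨e, h⟩

lemma liftEdge_of_mem {e : G.Edge} (h : u ∈ G.ends e) :
    liftEdge G u h2 hdd ι e = pendantEdge (ι.symm ⟨e, h⟩) := dif_pos h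

lemma liftEdge_of_not_mem {e : G.Edge} (h : u ∉ G.ends e) :
    liftEdge G u h2 hdd ι e = .inl ⟨e, h⟩ := dif_neg h

lemma map_ends_liftEdge (e : G.Edge) :
    ((G.cycleExpand u h2 hdd ι).ends (liftEdge G u h2 hdd ι e)).map (contractCycle u) =
      G.ends e := by
  by_cases h : u ∈ G.ends e
  · rw [liftEdge_of_mem G u h2 hdd ι h, map_ends_pendantEdge, Equiv.apply_symm_apply]
  · rw [liftEdge_of_not_mem G u h2 hdd ι h]
    exact map_ends_cycleExpand_inl G u h2 hdd ι ⟨e, h⟩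

lemma liftEdge_injective : Function.Injective (liftEdge G u h2 hdd ι) := by
  intro e e' h
  by_cases he : u ∈ G.ends e <;> by_cases he' : u ∈ G.ends e' <;>
    simp only [liftEdge_of_mem G u h2 hdd ι, liftEdge_of_not_mem G u h2 hdd ι, he, he',
      not_false_eq_true] at h
  · exact congrArg Subtype.val (ι.symm.injective (Sum.inl_injective (Sum.inr_injective h)))
  · cases h
  · cases h
  · exact congrArg Subtype.val (Sum.inl_injective h)

lemma cycleEdge_not_mem_cutEdges_preimage (j : Fin d') (B : Set V) :
    cycleEdge j ∉ (G.cycleExpand u h2 hdd ι).cutEdges (contractCycle u ⁻¹' B) := by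
  have hends : ∀ w ∈ (G.cycleExpand u h2 hdd ι).ends (cycleEdge j), contractCycle u w = u := by
    intro w hw
    rcases Sym2.mem_iff.1 hw with rfl | rfl <;> rfl
  rintro ⟨⟨w, hw, hwB⟩, ⟨w', hw', hw'B⟩⟩
  exact hw'B (by rwa [Set.mem_preimage, hends w' hw', ← hends w hw])

lemma cutEdges_preimage_contractCycle (B : Set V) :
    (G.cycleExpand u h2 hdd ι).cutEdges (contractCycle u ⁻¹' B) =
      liftEdge G u h2 hdd ι '' G.cutEdges B := by
  ext ε
  constructor
  · intro h
    rcases ε with e | i | j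
    · exact ⟨e, (mem_cutEdges_preimage_iff (map_ends_cycleExpand_inl G u h2 hdd ι e) B).1 h,
        liftEdge_of_not_mem G u h2 hdd ι e.2⟩
    · refine ⟨ι i, (mem_cutEdges_preimage_iff (map_ends_pendantEdge G u h2 hdd ι i) B).1 h,
        ?_⟩
      rw [liftEdge_of_mem G u h2 hdd ι (ι i).2, Subtype.coe_eta, Equiv.symm_apply_apply]
      rfl
    · exact absurd h (cycleEdge_not_mem_cutEdges_preimage G u h2 hdd ι j B)
  · rintro ⟨e, he, rfl⟩
    exact (mem_cutEdges_preimage_iff (map_ends_liftEdge G u h2 hdd ι e) B).2 he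

lemma ncard_cutEdges_preimage_contractCycle (B : Set V) :
    ((G.cycleExpand u h2 hdd ι).cutEdges (contractCycle u ⁻¹' B)).ncard =
      (G.cutEdges B).ncard := by
  rw [cutEdges_preimage_contractCycle, Set.ncard_image_of_injective _ (liftEdge_injective ..)]

lemma le_ncard_cutEdges_of_cycle_subset {k : ℕ} (hG : G.EdgeConnected k)
    {S : Set ({x : V // x ≠ u} ⊕ Fin d')} (hS : ∀ j, .inr j ∈ S)
    {x y : {x : V // x ≠ u} ⊕ Fin d'} (hx : x ∈ S) (hy : y ∉ S) :
    k ≤ ((G.cycleExpand u h2 hdd ι).cutEdges S).ncard := by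
  have hx' : contractCycle u x ∈ contractCycle u '' S := Set.mem_image_of_mem _ hx
  have hy' : contractCycle u y ∉ contractCycle u '' S := fun h =>
    hy (by rwa [← preimage_image_contractCycle hS])
  rw [← preimage_image_contractCycle hS, ncard_cutEdges_preimage_contractCycle]
  exact le_ncard_cutEdges_of_hasEDP
    (hG.2 (contractCycle u x) (contractCycle u y) fun h => hy' (h ▸ hx')) hx' hy'

lemma exists_ends_pendantEdge_castLE (j : Fin d') :
    ∃ a, (G.cycleExpand u h2 hdd ι).ends (pendantEdge (Fin.castLE hdd j)) =
      s(.inr j, .inl a) := by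
  refine ⟨⟨Sym2.Mem.other (ι (Fin.castLE hdd j)).2, other_ne _⟩, ?_⟩
  simp only [pendantEdge, cycleExpand]
  congr
  simp only [Fin.val_castLE]
  omega

lemma pendantEdge_castLE_mem_cutEdges (j : Fin d') {S : Set ({x : V // x ≠ u} ⊕ Fin d')}
    (hj : .inr j ∈ S) (hS : ∀ a, .inl a ∉ S) :
    pendantEdge (Fin.castLE hdd j) ∈ (G.cycleExpand u h2 hdd ι).cutEdges S := by
  obtain ⟨a, ha⟩ := exists_ends_pendantEdge_castLE G u h2 hdd ι j
  exact (mem_cutEdges_iff_of_ends_eq ha S).2 (Or.inl ⟨hj, hS a⟩)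

/-- The cycle vertices hang off the rest of the expansion by their pendant edges, and the rest
is connected because `G - u` is. -/
lemma exists_mem_cutEdges_ne_cycle (hu : G.ConnectedOn {u}ᶜ)
    {S : Set ({x : V // x ≠ u} ⊕ Fin d')} {x y : {x : V // x ≠ u} ⊕ Fin d'} (hx : x ∈ S)
    (hy : y ∉ S) :
    ∃ ε ∈ (G.cycleExpand u h2 hdd ι).cutEdges S, ∀ j, ε ≠ cycleEdge j := by
  by_cases hall : ∀ a, .inl a ∈ S
  · rcases y with a | j
    · exact absurd (hall a) hy
    refine ⟨pendantEdge (Fin.castLE hdd j), ?_, fun _ h => Sum.inl_ne_inr (Sum.inr_injective h)⟩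
    rw [← cutEdges_compl]
    exact pendantEdge_castLE_mem_cutEdges G u h2 hdd ι j hy (by simpa using hall)
  by_cases hnone : ∀ a, .inl a ∉ S
  · rcases x with a | j
    · exact absurd hx (hnone a)
    exact ⟨_, pendantEdge_castLE_mem_cutEdges G u h2 hdd ι j hx hnone,
      fun _ h => Sum.inl_ne_inr (Sum.inr_injective h)⟩
  simp only [not_forall, not_not] at hall hnone
  obtain ⟨a, ha⟩ := hall
  obtain ⟨b, hb⟩ := hnone
  obtain ⟨f, hf, hfu⟩ := hu.exists_mem_cutEdges (S := contractCycle u '' S) b.2 a.2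
    ⟨_, hb, rfl⟩ fun h => ha ((inl_mem_preimage_image_contractCycle a).1 h)
  have hfu' : u ∉ G.ends f := fun h => hfu u h rfl
  refine ⟨.inl ⟨f, hfu'⟩, ?_, fun _ h => Sum.inl_ne_inr h⟩
  refine (mem_cutEdges_congr fun w hw => ?_).2 ((mem_cutEdges_preimage_iff
    (map_ends_cycleExpand_inl G u h2 hdd ι ⟨f, hfu'⟩) _).2 hf)
  obtain ⟨a', -, rfl⟩ := Sym2.mem_map.1 hw
  exact (inl_mem_preimage_image_contractCycle a').symm

lemma three_le_ncard_cutEdges_of_split [NeZero d'] (hu : G.ConnectedOn {u}ᶜ)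
    {S : Set ({x : V // x ≠ u} ⊕ Fin d')} {x y : {x : V // x ≠ u} ⊕ Fin d'} (hx : x ∈ S)
    (hy : y ∉ S) {j₁ j₂ : Fin d'} (h₁ : .inr j₁ ∈ S) (h₂ : .inr j₂ ∉ S) :
    3 ≤ ((G.cycleExpand u h2 hdd ι).cutEdges S).ncard := by
  obtain ⟨m, hm, hm'⟩ :=
    Fin.exists_pred_and_not_pred_add_one (fun j => Sum.inr j ∈ S) h₁ h₂
  obtain ⟨n, hn, hn'⟩ :=
    Fin.exists_pred_and_not_pred_add_one (fun j => Sum.inr j ∉ S) h₂ (not_not.2 h₁)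
  obtain ⟨ε, hε, hεc⟩ := exists_mem_cutEdges_ne_cycle G u h2 hdd ι hu hx hy
  have hmn : m ≠ n := fun h => hn (h ▸ hm)
  refine (Set.two_lt_ncard_iff (Set.toFinite _)).2
    ⟨cycleEdge m, cycleEdge n, ε, ?_, ?_, hε, ?_, (hεc m).symm, (hεc n).symm⟩
  · exact (mem_cutEdges_iff_of_ends_eq (ends_cycleEdge G u h2 hdd ι m) S).2
      (Or.inl ⟨hm, hm'⟩)
  · exact (mem_cutEdges_iff_of_ends_eq (ends_cycleEdge G u h2 hdd ι n) S).2
      (Or.inr ⟨not_not.1 hn', hn⟩)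
  · exact fun h => hmn (Sum.inr_injective (Sum.inr_injective h))

theorem edgeConnected_cycleExpand (hG : G.EdgeConnected 3) (hu : G.ConnectedOn {u}ᶜ) :
    (G.cycleExpand u h2 hdd ι).EdgeConnected 3 := by
  have : NeZero d' := ⟨by omega⟩
  refine ⟨⟨.inr 0, .inr 1, fun h => ?_⟩,
    fun x y _ => hasEDP_iff_forall_le_ncard_cutEdges.2 fun S hx hy => ?_⟩
  · have := congrArg Fin.val (Sum.inr_injective h)
    simp [Nat.one_mod_eq_one.2 (show d' ≠ 1 by omega)] at this
  by_cases hin : ∃ j, .inr j ∈ S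
  · by_cases hout : ∃ j, .inr j ∉ S
    · obtain ⟨⟨j₁, h₁⟩, ⟨j₂, h₂⟩⟩ := And.intro hin hout
      exact three_le_ncard_cutEdges_of_split G u h2 hdd ι hu hx hy h₁ h₂
    · exact le_ncard_cutEdges_of_cycle_subset G u h2 hdd ι hG (by simpa using hout) hx hy
  · rw [← cutEdges_compl]
    exact le_ncard_cutEdges_of_cycle_subset G u h2 hdd ι hG (by simpa using hin) hy
      (not_not.2 hx)

lemma ncard_cutEdges_singleton_le_three [NeZero d'] (j : Fin d') (hj : j.val + 1 < d') :
    ((G.cycleExpand u h2 hdd ι).cutEdges {.inr j}).ncard ≤ 3 := by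
  have hsub : (G.cycleExpand u h2 hdd ι).cutEdges {.inr j} ⊆
      ↑({pendantEdge (Fin.castLE hdd j), cycleEdge j, cycleEdge (j - 1)} :
        Finset (G.cycleExpand u h2 hdd ι).Edge) := by
    rintro ε ⟨⟨w, hw, rfl⟩, -⟩
    simp only [Finset.coe_insert, Finset.coe_singleton, Set.mem_insert_iff,
      Set.mem_singleton_iff]
    rcases ε with e | i | m
    · obtain ⟨a, -, ha⟩ := Sym2.mem_map.1 hw
      exact absurd ha Sum.inl_ne_inr
    · rcases Sym2.mem_iff.1 hw with h | h
      · have hi := congrArg Fin.val (Sum.inr_injective h)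
        refine Or.inl (congrArg _ (congrArg _ (Fin.ext ?_)))
        simp only [Fin.val_castLE] at hi ⊢
        omega
      · exact absurd h Sum.inr_ne_inl
    · change Sum.inr j ∈ (G.cycleExpand u h2 hdd ι).ends (cycleEdge m) at hw
      rw [ends_cycleEdge] at hw
      rcases Sym2.mem_iff.1 hw with h | h <;> obtain rfl | rfl := Sum.inr_injective h
      · exact Or.inr (Or.inl rfl)
      · exact Or.inr (Or.inr (by rw [add_sub_cancel_right]; rfl))
  refine (Set.ncard_le_ncard hsub (Set.toFinite _)).trans ?_
  rw [Set.ncard_coe_finset]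
  exact Finset.card_le_three

lemma exists_ncard_cutEdges_le {k : ℕ} (hk : 3 ≤ k)
    {x y : {x : V // x ≠ u} ⊕ Fin d'} (hxy : x ≠ y)
    (hG : contractCycle u x ≠ contractCycle u y → ∃ B : Set V,
      contractCycle u x ∈ B ∧ contractCycle u y ∉ B ∧ (G.cutEdges B).ncard ≤ k) :
    ∃ S, x ∈ S ∧ y ∉ S ∧ ((G.cycleExpand u h2 hdd ι).cutEdges S).ncard ≤ k := by
  have : NeZero d' := ⟨by omega⟩
  by_cases hπ : contractCycle u x = contractCycle u y
  · rcases x with a | jx <;> rcases y with b | jy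
    · exact absurd (congrArg Sum.inl (Subtype.ext hπ)) hxy
    · exact absurd hπ a.2
    · exact absurd hπ.symm b.2
    have hne : jx ≠ jy := fun h => hxy (congrArg _ h)
    by_cases hjx : jx.val + 1 < d'
    · exact ⟨{.inr jx}, rfl, fun h => hne (Sum.inr_injective h).symm,
        (ncard_cutEdges_singleton_le_three G u h2 hdd ι jx hjx).trans hk⟩
    · have hjy : jy.val + 1 < d' := by
        have := Fin.val_ne_of_ne hne
        omega
      refine ⟨{.inr jy}ᶜ, fun h => hne (Sum.inr_injective h), fun h => h rfl, ?_⟩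
      rw [cutEdges_compl]
      exact (ncard_cutEdges_singleton_le_three G u h2 hdd ι jy hjy).trans hk
  · obtain ⟨B, hx, hy, hB⟩ := hG hπ
    exact ⟨contractCycle u ⁻¹' B, hx, hy, by rwa [ncard_cutEdges_preimage_contractCycle]⟩

end CycleExpand

/-- **Cycle expansion preserves exact 3-edge-connectivity.**  Let `G` be an
exactly 3-edge-connected, 2-vertex-connected multigraph, `u` a vertex of
degree `d` whose incident edges (leading to the neighbors `v₁, …, v_d`, with
multiplicity) are enumerated by `ι`, and let `2 ≤ d' ≤ d`.  Then the graph
`G'` obtained by replacing `u` with a cycle on `d'` new vertices — joining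
`u_i` to `v_i` for `i ≤ d' - 1` and `u_{d'}` to `v_i` for `i ≥ d'` — is
exactly 3-edge-connected. -/
theorem cycleExpand_exactlyEdgeConnected {V : Type} (G : Multigraph V)
    (hG : G.ExactlyEdgeConnected 3) (hbi : G.Biconnected) (u : V) {d d' : ℕ}
    (h2 : 2 ≤ d') (hdd : d' ≤ d) (ι : Fin d ≃ {e : G.Edge // u ∈ G.ends e}) :
    (G.cycleExpand u h2 hdd ι).ExactlyEdgeConnected 3 := by
  have hlower := edgeConnected_cycleExpand G u h2 hdd ι
    ⟨hG.1, fun x y hxy => (hG.2 x y hxy).1⟩ (hbi.2 u)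
  refine ⟨hlower.1, fun x y hxy => ⟨hlower.2 x y hxy, fun h4 => ?_⟩⟩
  obtain ⟨S, hx, hy, hS⟩ := exists_ncard_cutEdges_le G u h2 hdd ι le_rfl hxy fun hπ =>
    ((exactlyEdgeConnected_iff.1 hG).2 _ _ hπ).2
  have := le_ncard_cutEdges_of_hasEDP h4 hx hy
  omega

end Multigraph
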